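/- arXiv:2001.07754 — 4 statements merged into one kernel-verified Lean document; each statement's English description precedes it below -/
import Mathlib

section
/- Let O be the ELU ontology {A ⊑ B₁ ⊔ B₂, ∃r.B₂ ⊑ ∃r.(B₁ ⊓ L), L ⊑ ∃s.L}. Then for every n ≥ 0, every model of O satisfies ∃r.(A ⊓ ∃sⁿ.⊤) ⊑ ∃r.(B₁ ⊓ ∃sⁿ.⊤). -/
namespace DL

/- Basic description-logic framework: concepts, interpretations, ontologies. -/

inductive Concept (Cn R : Type) : Type where
  | top  : Concept Cn R
  | bot  : Concept Cn R
  | name : Cn → Concept Cn R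
  | neg  : Concept Cn R → Concept Cn R
  | conj : Concept Cn R → Concept Cn R → Concept Cn R
  | disj : Concept Cn R → Concept Cn R → Concept Cn R
  | ex   : R → Concept Cn R → Concept Cn R
  | all  : R → Concept Cn R → Concept Cn R
  deriving DecidableEq

namespace Concept
variable {Cn R : Type}

/-- `EL` concepts: only ⊤, concept names, ⊓ and ∃r.C. -/
def isEL : Concept Cn R → Prop
  | top => True
  | bot => False
  | name _ => True
  | neg _ => False
  | conj c d => c.isEL ∧ d.isEL
  | disj _ _ => False
  | ex _ c => c.isEL
  | all _ _ => False

/-- `ELU` concepts: additionally allow ⊔. -/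
def isELU : Concept Cn R → Prop
  | top => True
  | bot => False
  | name _ => True
  | neg _ => False
  | conj c d => c.isELU ∧ d.isELU
  | disj c d => c.isELU ∧ d.isELU
  | ex _ c => c.isELU
  | all _ _ => False

/-- `EL⊥` concepts. -/
def isELbot : Concept Cn R → Prop
  | top => True
  | bot => True
  | name _ => True
  | neg _ => False
  | conj c d => c.isELbot ∧ d.isELbot
  | disj _ _ => False
  | ex _ c => c.isELbot
  | all _ _ => False

/-- `ELU⊥` concepts. -/
def isELUbot : Concept Cn R → Prop
  | top => True
  | bot => True
  | name _ => True
  | neg _ => False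
  | conj c d => c.isELUbot ∧ d.isELUbot
  | disj c d => c.isELUbot ∧ d.isELUbot
  | ex _ c => c.isELUbot
  | all _ _ => False

/-- the nesting depth of ∃/∀ restrictions. -/
def depth : Concept Cn R → ℕ
  | top => 0
  | bot => 0
  | name _ => 0
  | neg c => c.depth
  | conj c d => max c.depth d.depth
  | disj c d => max c.depth d.depth
  | ex _ c => c.depth + 1
  | all _ c => c.depth + 1

/-- size of a concept (occurrences of symbols). -/
def size : Concept Cn R → ℕ
  | top => 1
  | bot => 1
  | name _ => 1
  | neg c => c.size + 1
  | conj c d => c.size + d.size + 1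
  | disj c d => c.size + d.size + 1
  | ex _ c => c.size + 2
  | all _ c => c.size + 2

/-- set of subconcepts. -/
def sub : Concept Cn R → Set (Concept Cn R)
  | top => {top}
  | bot => {bot}
  | name A => {name A}
  | neg c => insert (neg c) c.sub
  | conj c d => insert (conj c d) (c.sub ∪ d.sub)
  | disj c d => insert (disj c d) (c.sub ∪ d.sub)
  | ex r c => insert (ex r c) c.sub
  | all r c => insert (all r c) c.sub

/-- concept names occurring in a concept. -/
def names : Concept Cn R → Set Cn
  | top => ∅
  | bot => ∅
  | name A => {A}
  | neg c => c.names
  | conj c d => c.names ∪ d.names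
  | disj c d => c.names ∪ d.names
  | ex _ c => c.names
  | all _ c => c.names

/-- role names occurring in a concept. -/
def roles : Concept Cn R → Set R
  | top => ∅
  | bot => ∅
  | name _ => ∅
  | neg c => c.roles
  | conj c d => c.roles ∪ d.roles
  | disj c d => c.roles ∪ d.roles
  | ex r c => insert r c.roles
  | all r c => insert r c.roles

/-- top-level conjuncts of a concept. -/
def tlConj : Concept Cn R → Set (Concept Cn R)
  | conj c d => c.tlConj ∪ d.tlConj
  | c => {c}

end Concept

/-- n-fold nesting of ∃r applied to a concept. -/
def exN {Cn R : Type} (r : R) : ℕ → Concept Cn R → Concept Cn R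
  | 0, c => c
  | n + 1, c => Concept.ex r (exN r n c)

/-- An interpretation: a domain together with extensions of concept and role names. -/
structure Interp (Cn R : Type) : Type 1 where
  Dom : Type
  cI : Cn → Set Dom
  rI : R → Set (Dom × Dom)

/-- Semantics of concepts. -/
def Interp.interp {Cn R : Type} (I : Interp Cn R) : Concept Cn R → Set I.Dom
  | .top => Set.univ
  | .bot => ∅
  | .name A => I.cI A
  | .neg c => (I.interp c)ᶜ
  | .conj c d => I.interp c ∩ I.interp d
  | .disj c d => I.interp c ∪ I.interp d
  | .ex r c => {x | ∃ y, (x, y) ∈ I.rI r ∧ y ∈ I.interp c}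
  | .all r c => {x | ∀ y, (x, y) ∈ I.rI r → y ∈ I.interp c}

/-- An ontology: a set of concept inclusions `C ⊑ D`, coded as pairs `(C, D)`. -/
abbrev Ontology (Cn R : Type) := Set (Concept Cn R × Concept Cn R)

/-- `I` is a model of the ontology `O`. -/
def Interp.isModel {Cn R : Type} (I : Interp Cn R) (O : Ontology Cn R) : Prop :=
  ∀ ci ∈ O, I.interp ci.1 ⊆ I.interp ci.2

/-- `O ⊨ c ⊑ d`. -/
def entails {Cn R : Type} (O : Ontology Cn R) (c d : Concept Cn R) : Prop :=
  ∀ I : Interp Cn R, I.isModel O → I.interp c ⊆ I.interp d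

/-- logical equivalence (w.r.t. the empty ontology). -/
def lequiv {Cn R : Type} (c d : Concept Cn R) : Prop :=
  entails ∅ c d ∧ entails ∅ d c

/-- set of subconcepts of an ontology. -/
def subO {Cn R : Type} (O : Ontology Cn R) : Set (Concept Cn R) :=
  {F | ∃ ci ∈ O, F ∈ ci.1.sub ∪ ci.2.sub}

/-- concept names of an ontology. -/
def sigC {Cn R : Type} (O : Ontology Cn R) : Set Cn :=
  {A | ∃ ci ∈ O, A ∈ ci.1.names ∪ ci.2.names}

/-- role names of an ontology. -/
def sigR {Cn R : Type} (O : Ontology Cn R) : Set R :=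
  {r | ∃ ci ∈ O, r ∈ ci.1.roles ∪ ci.2.roles}


/- STATEMENT 2: O = {A ⊑ B₁ ⊔ B₂, ∃r.B₂ ⊑ ∃r.(B₁ ⊓ L), L ⊑ ∃s.L} entails
   ∃r.(A ⊓ ∃sⁿ.⊤) ⊑ ∃r.(B₁ ⊓ ∃sⁿ.⊤) for all n. -/

-- concept names: A = 0, B₁ = 1, B₂ = 2, L = 3; role names: r = 0, s = 1
def cA : Concept ℕ ℕ := .name 0
def cB₁ : Concept ℕ ℕ := .name 1
def cB₂ : Concept ℕ ℕ := .name 2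
def cL : Concept ℕ ℕ := .name 3
def rr : ℕ := 0
def rs : ℕ := 1

def O₂ : Ontology ℕ ℕ :=
  {(cA, .disj cB₁ cB₂),
   (.ex rr cB₂, .ex rr (.conj cB₁ cL)),
   (cL, .ex rs cL)}


lemma L_exN {I : Interp ℕ ℕ} (hI : I.isModel O₂) :
    ∀ n : ℕ, I.interp cL ⊆ I.interp (exN rs n .top) := by
  intro n
  induction n with
  | zero => intro x _; simp [exN, Interp.interp]
  | succ n ih =>
    intro x hx
    have h := hI (cL, .ex rs cL) (by simp [O₂]) hx
    obtain ⟨y, hxy, hy⟩ := h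
    exact ⟨y, hxy, ih hy⟩

theorem stmt2 :
    ∀ n : ℕ, ∀ I : Interp ℕ ℕ, I.isModel O₂ →
      I.interp (.ex rr (.conj cA (exN rs n .top))) ⊆
        I.interp (.ex rr (.conj cB₁ (exN rs n .top))) := by
  intro n I hI x hx
  obtain ⟨y, hxy, hyA, hyS⟩ := hx
  rcases hI (cA, .disj cB₁ cB₂) (by simp [O₂]) hyA with h | h
  · exact ⟨y, hxy, h, hyS⟩
  · have hx' : x ∈ I.interp (.ex rr cB₂) := ⟨y, hxy, h⟩
    obtain ⟨z, hxz, hz1, hzL⟩ := hI (.ex rr cB₂, .ex rr (.conj cB₁ cL)) (by simp [O₂]) hx'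
    exact ⟨z, hxz, hz1, L_exN hI n hzL⟩
end DL
end

section
/- Let O be the ELU ontology {A ⊑ B₁ ⊔ B₂, ∃r.B₂ ⊑ ∃r.(B₁ ⊓ L), L ⊑ ∃s.L}. Then for all n ≥ 0 and m > n, there exists a model I of O and an element d with d ∈ (∃r.(A ⊓ ∃sⁿ.⊤))^I but d ∉ (∃r.(B₁ ⊓ ∃sᵐ.⊤))^I. -/
namespace DL

/-- Model for statement 3: element 0 has r-successor 1, which is in A and B₁ and has an
s-chain 1 → 2 → ⋯ → n+1. -/
abbrev Ic (n : ℕ) : Interp ℕ ℕ :=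
  ⟨ℕ, fun c => if c = 0 ∨ c = 1 then {1} else ∅,
    fun ρ => if ρ = 0 then {(0, 1)} else {p | 1 ≤ p.1 ∧ p.1 ≤ n ∧ p.2 = p.1 + 1}⟩

lemma Ic_exN_up (n : ℕ) : ∀ (k : ℕ) (x : ℕ), 1 ≤ x → x + k ≤ n + 1 →
    x ∈ (Ic n).interp (exN rs k .top) := by
  intro k
  induction k with
  | zero => intro x _ _; simp [exN, Interp.interp]
  | succ k ih =>
    intro x hx hle
    refine ⟨x + 1, ?_, ih (x + 1) (by omega) (by omega)⟩
    simp only [Ic, rs, Interp.interp]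
    norm_num
    omega

lemma Ic_exN_down (n : ℕ) : ∀ (k : ℕ) (x : ℕ), x ∈ (Ic n).interp (exN rs k .top) →
    k = 0 ∨ x + k ≤ n + 1 := by
  intro k
  induction k with
  | zero => intro x _; left; rfl
  | succ k ih =>
    intro x hx
    obtain ⟨y, hxy, hy⟩ := hx
    simp only [Ic, rs, Set.mem_setOf_eq] at hxy
    norm_num at hxy
    obtain ⟨h1, h2, rfl⟩ := hxy
    rcases ih (x + 1) hy with h | h <;> omega

theorem stmt3 :
    ∀ n m : ℕ, n < m →
      ∃ (I : Interp ℕ ℕ) (d : I.Dom),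
        I.isModel O₂ ∧
        d ∈ I.interp (.ex rr (.conj cA (exN rs n .top))) ∧
        d ∉ I.interp (.ex rr (.conj cB₁ (exN rs m .top))) := by
  intro n m hnm
  refine ⟨Ic n, (0 : ℕ), ?_, ?_, ?_⟩
  · intro ci hci
    rcases hci with h | h | h <;> subst h
    · intro x hx
      left
      simpa [Ic, cA, cB₁, Interp.interp] using hx
    · intro x hx
      obtain ⟨y, _, hy⟩ := hx
      exact absurd hy (by simp [Ic, cB₂, Interp.interp])
    · intro x hx
      exact absurd hx (by simp [Ic, cL, Interp.interp])
  · refine ⟨(1 : ℕ), ?_, ?_, ?_⟩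
    · simp [Ic, rr, Interp.interp]
    · simp [Ic, cA, Interp.interp]
    · exact Ic_exN_up n n 1 le_rfl (by omega)
  · rintro ⟨y, hxy, hy1, hy2⟩
    simp only [Ic, rr, Set.mem_setOf_eq] at hxy
    norm_num at hxy
    subst hxy
    rcases Ic_exN_down n m 1 hy2 with h | h <;> omega
end DL
end

section
/- Let O be the ELU⊥ ontology {A₁ ⊑ M ⊔ N₁, A₂ ⊑ M ⊔ N₂, ∃r.N₁ ⊓ ∃r.N₂ ⊑ ⊥}. Then for every n ≥ 1, every model of O satisfies ∃r.(A₁ ⊓ ∃rⁿ.⊤) ⊓ ∃r.(A₂ ⊓ ∃rⁿ.⊤) ⊑ ∃r.(M ⊓ ∃rⁿ.⊤). -/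
namespace DL

/- STATEMENT 9: O = {A₁ ⊑ M ⊔ N₁, A₂ ⊑ M ⊔ N₂, ∃r.N₁ ⊓ ∃r.N₂ ⊑ ⊥} entails
   ∃r.(A₁ ⊓ ∃rⁿ.⊤) ⊓ ∃r.(A₂ ⊓ ∃rⁿ.⊤) ⊑ ∃r.(M ⊓ ∃rⁿ.⊤) for all n ≥ 1. -/

-- concept names: A₁ = 0, A₂ = 1, M = 2, N₁ = 3, N₂ = 4; role name: r = 0
def cA₁ : Concept ℕ ℕ := .name 0
def cA₂ : Concept ℕ ℕ := .name 1
def cM : Concept ℕ ℕ := .name 2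
def cN₁ : Concept ℕ ℕ := .name 3
def cN₂ : Concept ℕ ℕ := .name 4
def O₉ : Ontology ℕ ℕ :=
  {(cA₁, .disj cM cN₁),
   (cA₂, .disj cM cN₂),
   (.conj (.ex rr cN₁) (.ex rr cN₂), .bot)}

theorem stmt9 :
    ∀ n : ℕ, 1 ≤ n → ∀ I : Interp ℕ ℕ, I.isModel O₉ →
      I.interp (.conj (.ex rr (.conj cA₁ (exN rr n .top)))
                      (.ex rr (.conj cA₂ (exN rr n .top)))) ⊆
        I.interp (.ex rr (.conj cM (exN rr n .top))) := by

  intro n _ I hM x hx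
  obtain ⟨⟨y₁, hr₁, hy₁A, hy₁e⟩, ⟨y₂, hr₂, hy₂A, hy₂e⟩⟩ := hx
  have h1 := hM (cA₁, .disj cM cN₁) (by simp [O₉])
  have h2 := hM (cA₂, .disj cM cN₂) (by simp [O₉])
  have h3 := hM (.conj (.ex rr cN₁) (.ex rr cN₂), .bot) (by simp [O₉])
  rcases h1 hy₁A with hm | hn1
  · exact ⟨y₁, hr₁, hm, hy₁e⟩
  rcases h2 hy₂A with hm | hn2
  · exact ⟨y₂, hr₂, hm, hy₂e⟩
  exact absurd (h3 ⟨⟨y₁, hr₁, hn1⟩, ⟨y₂, hr₂, hn2⟩⟩) (by simp [Interp.interp])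

end DL
end

section
/- Let O be the ELU ontology {⊤ ⊑ B₁ ⊔ B₂, B₁ ⊓ ∃r.B₁ ⊑ A, B₂ ⊓ ∃r.B₂ ⊑ A}. Then: (1) in every model of O, every element a with r(a,a) (i.e., (a,a) ∈ r^I) satisfies A; and (2) there exists a model I of O with elements a ≠ b, (a,b) ∈ r^I, (b,a) ∈ r^I, and a ∉ A^I. -/
namespace DL

def O₁₂ : Ontology ℕ ℕ :=
  {(.top, .disj cB₁ cB₂),
   (.conj cB₁ (.ex rr cB₁), cA),
   (.conj cB₂ (.ex rr cB₂), cA)}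

theorem stmt12 :
    (∀ I : Interp ℕ ℕ, I.isModel O₁₂ →
      ∀ a : I.Dom, (a, a) ∈ I.rI rr → a ∈ I.interp cA) ∧
    (∃ (I : Interp ℕ ℕ) (a b : I.Dom),
      I.isModel O₁₂ ∧ a ≠ b ∧ (a, b) ∈ I.rI rr ∧ (b, a) ∈ I.rI rr ∧
      a ∉ I.interp cA) := by
  constructor
  · intro I hM a hr
    have h1 := hM (.top, .disj cB₁ cB₂) (by simp [O₁₂])
    have h2 := hM (.conj cB₁ (.ex rr cB₁), cA) (by simp [O₁₂])
    have h3 := hM (.conj cB₂ (.ex rr cB₂), cA) (by simp [O₁₂])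
    have ha : a ∈ I.interp (.disj cB₁ cB₂) := h1 (by simp [Interp.interp])
    rcases ha with hB | hB
    · exact h2 ⟨hB, ⟨a, hr, hB⟩⟩
    · exact h3 ⟨hB, ⟨a, hr, hB⟩⟩
  · refine ⟨⟨Bool, fun n => if n = 1 then {false} else if n = 2 then {true} else ∅,
      fun _ => {(false, true), (true, false)}⟩, false, true, ?_, by simp, by simp, by simp, ?_⟩
    · intro ci hci
      rcases hci with h | h | h <;> subst h <;>
        intro x hx <;>
        simp only [Interp.interp, cA, cB₁, cB₂, Set.mem_inter_iff, Set.mem_setOf_eq,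
          Set.mem_union, Set.mem_ite_empty_right] at hx ⊢
      · rcases x with _ | _ <;> simp
      · rcases hx with ⟨h1, y, hy, h2⟩
        simp at h1
        subst h1
        rcases hy with hy | hy <;> simp_all
      · rcases hx with ⟨h1, y, hy, h2⟩
        simp at h1
        subst h1
        rcases hy with hy | hy <;> simp_all
    · simp [Interp.interp, cA]
end DL
end
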